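/- arXiv:2306.00321 — 3 statements merged into one kernel-verified Lean document; each statement's English description precedes it below -/
import Mathlib

section
/- Let M = (S, A, P, r, γ) be an MDP with finite state space S, discount γ ∈ [0,1), and bounded rewards. Let λ: S × S → [0,1] and h: S → ℝ be bounded functions, and define the reshaped MDP with reward r̃(s,a) = r(s,a) + γ E_{s'∼P(·|s,a)}[λ(s,s') h(s')] and transition-dependent discount γ̃(s,s') = γ(1−λ(s,s')). For any policy π, letting V^π be its value in M and Ṽ^π its value in the reshaped MDP, and d^π(s,a,s'; s₀) the (unnormalized by (1−γ)) discounted state-action-next-state occupancy of π started at s₀, we have V^π(s₀) − Ṽ^π(s₀) = (γ/(1−γ)) E_{(s,a,s')∼d^π}[ λ(s,s') (Ṽ^π(s') − h(s')) ]. -/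
/-!
The difference `Δ = V - Ṽ` satisfies its own Bellman equation `Δ = γ c + γ K Δ`, where `K` is the
state-to-state transition matrix of `π` and `c s` is the expected blended gap
`λ(s,s') (Ṽ s' - h s')`. Unrolling this equation along the state distributions `ρ (t+1) = ρ t K`
telescopes to `Δ s₀ = Σ_{t<n} γ^(t+1) ρ_t·c + γ^n ρ_n·Δ`, and the remainder vanishes because every
`ρ_n` is a probability vector.
-/

open Finset Filter Topology Matrix

theorem hasSum_pow_mul_of_eq_add_mul_succ {γ C : ℝ} (hγ : |γ| < 1) {e G : ℕ → ℝ}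
    (he : ∀ t, |e t| ≤ C) (hrec : ∀ t, e t = G t + γ * e (t + 1)) :
    HasSum (fun t => γ ^ t * G t) (e 0) := by
  have hpartial : ∀ n, ∑ t ∈ range n, γ ^ t * G t = e 0 - γ ^ n * e n := by
    intro n
    induction n with
    | zero => simp
    | succ n ih => rw [sum_range_succ, ih, hrec n]; ring
  have hgeom : Tendsto (fun n => C * |γ| ^ n) atTop (𝓝 0) := by
    simpa using (tendsto_pow_atTop_nhds_zero_of_lt_one (abs_nonneg γ) hγ).const_mul C
  have htail : Tendsto (fun n => γ ^ n * e n) atTop (𝓝 0) :=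
    squeeze_zero_norm (fun n => by
      rw [Real.norm_eq_abs, abs_mul, abs_pow, mul_comm]
      exact mul_le_mul_of_nonneg_right (he n) (by positivity)) hgeom
  have hsummable : Summable fun t => γ ^ t * G t := by
    refine Summable.of_norm_bounded ((summable_geometric_of_lt_one (abs_nonneg γ) hγ).mul_left
      (C * (1 + |γ|))) fun t => ?_
    have hG : |G t| ≤ C * (1 + |γ|) := by
      rw [show G t = e t - γ * e (t + 1) by linarith [hrec t]]
      calc |e t - γ * e (t + 1)| ≤ |e t| + |γ| * |e (t + 1)| := by
            rw [← abs_mul]; exact abs_sub _ _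
        _ ≤ C + |γ| * C := by gcongr; exacts [he t, he (t + 1)]
        _ = C * (1 + |γ|) := by ring
    rw [Real.norm_eq_abs, abs_mul, abs_pow, mul_comm]
    exact mul_le_mul_of_nonneg_right hG (by positivity)
  rw [hsummable.hasSum_iff_tendsto_nat]
  simpa [hpartial] using tendsto_const_nhds.sub htail

namespace Matrix

variable {n : Type*} [Fintype n]

theorem abs_dotProduct_le_of_mem_stdSimplex {x : n → ℝ} (hx : x ∈ stdSimplex ℝ n)
    (f : n → ℝ) : |x ⬝ᵥ f| ≤ ‖f‖ :=
  calc |x ⬝ᵥ f| ≤ ∑ i, x i * ‖f‖ := by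
        refine (abs_sum_le_sum_abs _ _).trans (sum_le_sum fun i _ => ?_)
        rw [abs_mul, abs_of_nonneg (hx.1 i), ← Real.norm_eq_abs]
        exact mul_le_mul_of_nonneg_left (norm_le_pi_norm f i) (hx.1 i)
    _ = ‖f‖ := by rw [← sum_mul, hx.2, one_mul]

variable [DecidableEq n] {M : Matrix n n ℝ}

theorem vecMul_mem_stdSimplex (hM : M ∈ rowStochastic ℝ n) {x : n → ℝ}
    (hx : x ∈ stdSimplex ℝ n) : x ᵥ* M ∈ stdSimplex ℝ n := by
  refine ⟨nonneg_vecMul_of_mem_rowStochastic hM hx.1, ?_⟩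
  simpa [dotProduct_one] using vecMul_dotProduct_one_eq_one_rowStochastic hM
    (by simpa [dotProduct_one] using hx.2)

theorem hasSum_pow_mul_dotProduct_of_eq_add_smul_mulVec (hM : M ∈ rowStochastic ℝ n)
    {γ : ℝ} (hγ : |γ| < 1) {ρ : ℕ → n → ℝ} (hρ0 : ρ 0 ∈ stdSimplex ℝ n)
    (hρ : ∀ t, ρ (t + 1) = ρ t ᵥ* M) {Δ g : n → ℝ} (hΔ : Δ = g + γ • M *ᵥ Δ) :
    HasSum (fun t => γ ^ t * (ρ t ⬝ᵥ g)) (ρ 0 ⬝ᵥ Δ) := by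
  have hsimplex : ∀ t, ρ t ∈ stdSimplex ℝ n := by
    intro t
    induction t with
    | zero => exact hρ0
    | succ t ih => rw [hρ t]; exact vecMul_mem_stdSimplex hM ih
  refine hasSum_pow_mul_of_eq_add_mul_succ hγ
    (fun t => abs_dotProduct_le_of_mem_stdSimplex (hsimplex t) Δ) fun t => ?_
  conv_lhs => rw [hΔ]
  rw [hρ t, ← dotProduct_mulVec, dotProduct_add, dotProduct_smul, smul_eq_mul]

end Matrix

section Policy

variable {S A : Type*} [Fintype S] [Fintype A]

def policyKernel (P : S → A → S → ℝ) (π : S → A → ℝ) : Matrix S S ℝ :=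
  Matrix.of fun s s' => ∑ a, π s a * P s a s'

variable {P : S → A → S → ℝ} {π : S → A → ℝ}

theorem policyKernel_mulVec_apply (f : S → ℝ) (s : S) :
    (policyKernel P π *ᵥ f) s = ∑ a, π s a * ∑ s', P s a s' * f s' := by
  simp only [policyKernel, mulVec, dotProduct, of_apply, sum_mul, mul_sum]
  rw [sum_comm]
  exact sum_congr rfl fun a _ => sum_congr rfl fun s' _ => by ring

theorem vecMul_policyKernel_apply (ρ : S → ℝ) (s' : S) :
    (ρ ᵥ* policyKernel P π) s' = ∑ s, ∑ a, ρ s * π s a * P s a s' := by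
  simp only [policyKernel, vecMul, dotProduct, of_apply, mul_sum, mul_assoc]

theorem policyKernel_mem_rowStochastic [DecidableEq S] (hPnn : ∀ s a s', 0 ≤ P s a s')
    (hPsum : ∀ s a, ∑ s', P s a s' = 1) (hπnn : ∀ s a, 0 ≤ π s a) (hπsum : ∀ s, ∑ a, π s a = 1) :
    policyKernel P π ∈ rowStochastic ℝ S := by
  refine mem_rowStochastic_iff_sum.2 ⟨fun s s' => sum_nonneg fun a _ =>
    mul_nonneg (hπnn s a) (hPnn s a s'), fun s => ?_⟩
  simp only [policyKernel, of_apply]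
  rw [sum_comm]
  simp [← mul_sum, hPsum, hπsum]

theorem value_sub_reshapedValue (hPsum : ∀ s a, ∑ s', P s a s' = 1) {r : S → A → ℝ} {γ : ℝ}
    {lam : S → S → ℝ} {h V Vt : S → ℝ}
    (hV : ∀ s, V s = ∑ a, π s a * (r s a + γ * ∑ s', P s a s' * V s'))
    (hVt : ∀ s, Vt s = ∑ a, π s a * ∑ s', P s a s' *
      (r s a + γ * lam s s' * h s' + γ * (1 - lam s s') * Vt s')) :
    V - Vt = γ • (fun s => ∑ a, π s a * ∑ s', P s a s' * (lam s s' * (Vt s' - h s'))) +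
      γ • policyKernel P π *ᵥ (V - Vt) := by
  funext s
  have hV' : V s = ∑ a, π s a * ∑ s', P s a s' * (r s a + γ * V s') := by
    simp only [hV s, mul_add, sum_add_distrib, ← sum_mul, hPsum, one_mul, mul_left_comm _ γ,
      ← mul_sum]
  simp only [Pi.add_apply, Pi.smul_apply, smul_eq_mul, policyKernel_mulVec_apply, Pi.sub_apply]
  rw [hV', hVt s, mul_sum, mul_sum, ← sum_add_distrib, ← sum_sub_distrib]
  refine sum_congr rfl fun a _ => ?_
  simp only [mul_sum, ← sum_add_distrib, ← sum_sub_distrib]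
  exact sum_congr rfl fun s' _ => by ring

end Policy

theorem hubl_value_difference_general
    {S A : Type*} [Fintype S] [Fintype A] [DecidableEq S]
    (P : S → A → S → ℝ) (π : S → A → ℝ) (r : S → A → ℝ)
    (γ : ℝ) (hγ0 : 0 ≤ γ) (hγ1 : γ < 1)
    (lam : S → S → ℝ)
    (h : S → ℝ)
    (hPnn : ∀ s a s', 0 ≤ P s a s') (hPsum : ∀ s a, ∑ s', P s a s' = 1)
    (hπnn : ∀ s a, 0 ≤ π s a) (hπsum : ∀ s, ∑ a, π s a = 1)
    (s₀ : S) (ρ : ℕ → S → ℝ)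
    (hρ0 : ∀ s, ρ 0 s = if s = s₀ then 1 else 0)
    (hρ : ∀ t s', ρ (t + 1) s' = ∑ s, ∑ a, ρ t s * π s a * P s a s')
    (V Vt : S → ℝ)
    (hV : ∀ s, V s = ∑ a, π s a * (r s a + γ * ∑ s', P s a s' * V s'))
    (hVt : ∀ s, Vt s = ∑ a, π s a * ∑ s', P s a s' *
      (r s a + γ * lam s s' * h s' + γ * (1 - lam s s') * Vt s')) :
    V s₀ - Vt s₀ =
      (γ / (1 - γ)) * ((1 - γ) * ∑' t : ℕ, γ ^ t *
        ∑ s, ∑ a, ∑ s', ρ t s * π s a * P s a s' *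
          (lam s s' * (Vt s' - h s'))) := by
  have hρ0' : ρ 0 = Pi.single s₀ 1 := funext fun s => by rw [hρ0, Pi.single_apply]
  have hρK : ∀ t, ρ (t + 1) = ρ t ᵥ* policyKernel P π :=
    fun t => funext fun s' => by rw [hρ, vecMul_policyKernel_apply]
  have hsum := hasSum_pow_mul_dotProduct_of_eq_add_smul_mulVec
    (policyKernel_mem_rowStochastic hPnn hPsum hπnn hπsum) (abs_lt.2 ⟨by linarith, hγ1⟩)
    (hρ0' ▸ single_mem_stdSimplex ℝ s₀) hρK (value_sub_reshapedValue hPsum hV hVt)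
  rw [hρ0', single_dotProduct, one_mul, Pi.sub_apply] at hsum
  rw [← mul_assoc, div_mul_cancel₀ _ (by linarith), ← hsum.tsum_eq, ← tsum_mul_left]
  refine tsum_congr fun t => ?_
  simp only [dotProduct, Pi.smul_apply, smul_eq_mul, mul_sum]
  exact sum_congr rfl fun s _ => sum_congr rfl fun a _ => sum_congr rfl fun s' _ => by ring

/-- HUBL value-difference identity (Lemma `extended mdp`).
Finite state space `S`, action space `A`, transition kernel `P`, stochastic
policy `π`, reward `r`, discount `γ ∈ [0,1)`, blending `λ' : S × S → [0,1]`,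
heuristic `h`. `ρ t` is the state distribution at time `t` of `π` started at
`s₀`, `V` the value of `π` in the original MDP, `Vt` its value in the reshaped
MDP (reward `r̃(s,a) = r(s,a) + γ E_{s'}[λ'(s,s') h(s')]`, discount
`γ̃(s,s') = γ(1−λ'(s,s'))`).  Then
`V s₀ − Vt s₀ = (γ/(1−γ)) · E_{(s,a,s')∼d^π}[λ'(s,s')(Vt s' − h s')]`, where
`E_{d^π}[f] = (1−γ) Σ_t γ^t E[f(s_t,a_t,s_{t+1})]`. -/
theorem hubl_value_difference
    {S A : Type*} [Fintype S] [Fintype A] [DecidableEq S]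
    (P : S → A → S → ℝ) (π : S → A → ℝ) (r : S → A → ℝ)
    (γ : ℝ) (hγ0 : 0 ≤ γ) (hγ1 : γ < 1)
    (lam : S → S → ℝ) (hlam : ∀ s s', lam s s' ∈ Set.Icc (0 : ℝ) 1)
    (h : S → ℝ)
    (hPnn : ∀ s a s', 0 ≤ P s a s') (hPsum : ∀ s a, ∑ s', P s a s' = 1)
    (hπnn : ∀ s a, 0 ≤ π s a) (hπsum : ∀ s, ∑ a, π s a = 1)
    (s₀ : S) (ρ : ℕ → S → ℝ)
    (hρ0 : ∀ s, ρ 0 s = if s = s₀ then 1 else 0)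
    (hρ : ∀ t s', ρ (t + 1) s' = ∑ s, ∑ a, ρ t s * π s a * P s a s')
    (V Vt : S → ℝ)
    (hV : ∀ s, V s = ∑ a, π s a * (r s a + γ * ∑ s', P s a s' * V s'))
    (hVt : ∀ s, Vt s = ∑ a, π s a * ∑ s', P s a s' *
      (r s a + γ * lam s s' * h s' + γ * (1 - lam s s') * Vt s')) :
    V s₀ - Vt s₀ =
      (γ / (1 - γ)) * ((1 - γ) * ∑' t : ℕ, γ ^ t *
        ∑ s, ∑ a, ∑ s', ρ t s * π s a * P s a s' *
          (lam s s' * (Vt s' - h s'))) :=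
  hubl_value_difference_general P π r γ hγ0 hγ1 lam h hPnn hPsum hπnn hπsum s₀ ρ hρ0 hρ V Vt hV hVt
end

section
/- In a finite MDP with optimal value V*, suppose the heuristic satisfies h(s) ≤ V*(s) for all s ∈ S, and let λ: S×S → [0,1] be arbitrary. Then the value of the optimal policy π* in the reshaped MDP is pointwise dominated by the original optimal value: Ṽ^{π*}(s) ≤ V*(s) for all s ∈ S. -/
/-!
`D := Ṽ^{π*} − V*` satisfies `D = γ E[λ (h − V*) + (1 − λ) D]` under `π*` and `P`. Since
`h ≤ V*`, the first summand is nonpositive, so at a state where `D` is maximal and positive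
we would get `max D ≤ γ max D`, impossible for `γ < 1`.
-/

open Finset

theorem Finset.sum_mul_le_of_forall_le {ι : Type*} (s : Finset ι) {w f : ι → ℝ} {c : ℝ}
    (hw : ∀ i ∈ s, 0 ≤ w i) (hw1 : ∑ i ∈ s, w i = 1) (hf : ∀ i ∈ s, f i ≤ c) :
    ∑ i ∈ s, w i * f i ≤ c :=
  calc ∑ i ∈ s, w i * f i ≤ ∑ i ∈ s, w i * c :=
        sum_le_sum fun i hi => mul_le_mul_of_nonneg_left (hf i hi) (hw i hi)
    _ = c := by rw [← sum_mul, hw1, one_mul]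

theorem Finset.sum_mul_const_add {ι : Type*} (s : Finset ι) {w f : ι → ℝ} (c : ℝ)
    (hw1 : ∑ i ∈ s, w i = 1) :
    ∑ i ∈ s, w i * (c + f i) = c + ∑ i ∈ s, w i * f i := by
  simp only [mul_add, sum_add_distrib, ← sum_mul, hw1, one_mul]

theorem nonpos_of_le_mul_of_bound {S : Type*} [Finite S] {D : S → ℝ} {γ : ℝ} (hγ1 : γ < 1)
    (hD : ∀ M, 0 ≤ M → (∀ t, D t ≤ M) → ∀ s, D s ≤ γ * M) (s : S) : D s ≤ 0 := by
  by_contra! hs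
  have : Nonempty S := ⟨s⟩
  obtain ⟨t, ht⟩ := Finite.exists_max D
  have hmax := hD (D t) (hs.le.trans (ht s)) ht t
  nlinarith [ht s]

theorem convex_comb_le_of_nonpos_of_le {l x y M : ℝ} (hl : l ∈ Set.Icc (0 : ℝ) 1)
    (hx : x ≤ 0) (hy : y ≤ M) (hM : 0 ≤ M) : l * x + (1 - l) * y ≤ M := by
  nlinarith [hl.1, hl.2]

/-- Lemma `negative` of HUBL.  If the heuristic satisfies
`h ≤ V*` pointwise, then the reshaped value of the optimal policy `π*` is
pointwise dominated by the optimal value: `Ṽ^{π*} ≤ V*`. -/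
theorem hubl_reshaped_value_dominated
    {S A : Type*} [Fintype S] [Fintype A]
    (P : S → A → S → ℝ) (r : S → A → ℝ)
    (γ : ℝ) (hγ0 : 0 ≤ γ) (hγ1 : γ < 1)
    (πstar : S → A → ℝ) (hπnn : ∀ s a, 0 ≤ πstar s a)
    (hπsum : ∀ s, ∑ a, πstar s a = 1)
    (hPnn : ∀ s a s', 0 ≤ P s a s') (hPsum : ∀ s a, ∑ s', P s a s' = 1)
    (lam : S → S → ℝ) (hlam : ∀ s s', lam s s' ∈ Set.Icc (0 : ℝ) 1)
    (h Vstar Vtstar : S → ℝ)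
    (hVstar : ∀ s, Vstar s = ∑ a, πstar s a *
      (r s a + γ * ∑ s', P s a s' * Vstar s'))
    (hVtstar : ∀ s, Vtstar s = ∑ a, πstar s a * ∑ s', P s a s' *
      (r s a + γ * lam s s' * h s' + γ * (1 - lam s s') * Vtstar s'))
    (hh : ∀ s, h s ≤ Vstar s) :
    ∀ s, Vtstar s ≤ Vstar s := by
  have hdiff : ∀ s, Vtstar s - Vstar s = ∑ a, πstar s a * ∑ s', P s a s' *
      (γ * (lam s s' * (h s' - Vstar s') + (1 - lam s s') * (Vtstar s' - Vstar s'))) := by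
    intro s
    have hVstar' : Vstar s = ∑ a, πstar s a * ∑ s', P s a s' * (r s a + γ * Vstar s') := by
      simp only [hVstar s, sum_mul_const_add _ _ (hPsum s _), mul_left_comm _ γ, ← mul_sum]
    rw [hVtstar s, hVstar', ← sum_sub_distrib]
    refine sum_congr rfl fun a _ => ?_
    rw [← mul_sub, ← sum_sub_distrib]
    congr 1
    refine sum_congr rfl fun s' _ => ?_
    ring
  intro s
  refine sub_nonpos.1 (nonpos_of_le_mul_of_bound (D := fun t => Vtstar t - Vstar t) hγ1
    (fun M hM hDM t => ?_) s)
  rw [hdiff]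
  refine sum_mul_le_of_forall_le _ (fun a _ => hπnn t a) (hπsum t) fun a _ => ?_
  refine sum_mul_le_of_forall_le _ (fun s' _ => hPnn t a s') (hPsum t a) fun s' _ => ?_
  exact mul_le_mul_of_nonneg_left
    (convex_comb_le_of_nonpos_of_le (hlam t s') (sub_nonpos.2 (hh s')) (hDM s') hM) hγ0
end

section
/- Bias upper bound under exact behavior heuristic: In the setting of the bias-regret decomposition with constant λ on the support Ω and heuristic h(s) = V^μ(s) on Ω, if additionally h(s) ≤ V*(s) for all s (which holds since V^μ ≤ V*), then Bias(π̂, λ) ≤ (γλ/(1−γ)) E_{(s,a,s')∼d^{π*}}[ V*(s') − V^μ(s') | s, s' ∈ Ω ]. In particular, if μ is an optimal policy (V^μ = V* on Ω and the optimal occupancy stays in Ω), the bias is zero. -/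
/-!
`Ṽ^{π*}` and `V*` are both fixed points of the `π*`-Bellman operator of the reshaped MDP with
blending `κ = λ·1_{Ω×Ω}`: the heuristic is `h` for `Ṽ^{π*}` and `V*` itself for `V*`. This operator
is a `γ`-contraction that is monotone in the heuristic, so `h ≤ V*` gives `Ṽ^{π*} ≤ V*`, and
`h = V*` on `Ω` gives `Ṽ^{π*} = V*`. Hence the integrand `λ(Ṽ^{π*} − h)` of the bias is pointwise at
most `λ(V* − V^μ)` on `Ω × Ω`, and vanishes in the second case. The state distributions `ρ t` are
probability vectors, so the discounted sums converge and the pointwise inequality passes to them.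
-/

open Finset

namespace ReshapedMDP

variable {S A : Type*} [Fintype A]

def IsStochastic (π : S → A → ℝ) : Prop :=
  (∀ s a, 0 ≤ π s a) ∧ ∀ s, ∑ a, π s a = 1

theorem IsStochastic.sum_mul_le {π : S → A → ℝ} (hπ : IsStochastic π) (s : S) {f : A → ℝ}
    {c : ℝ} (hf : ∀ a, f a ≤ c) : ∑ a, π s a * f a ≤ c :=
  calc ∑ a, π s a * f a ≤ ∑ a, π s a * c := sum_le_sum fun a _ => by gcongr; exacts [hπ.1 s a, hf a]
    _ = c := by rw [← sum_mul, hπ.2 s, one_mul]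

variable [Fintype S]

section Bellman

variable (P : S → A → S → ℝ) (r : S → A → ℝ) (γ : ℝ) (π : S → A → ℝ) (κ : S → S → ℝ)

/-- `g` is the heuristic `h` and `κ` the blending `λ(s, s')` of the reshaped MDP. -/
def reshapedBellman (g V : S → ℝ) (s : S) : ℝ :=
  ∑ a, π s a * ∑ s', P s a s' * (r s a + γ * κ s s' * g s' + γ * (1 - κ s s') * V s')

variable {P r γ π κ}

theorem reshapedBellman_self (hP : ∀ s, IsStochastic (P s)) (V : S → ℝ) (s : S) :
    reshapedBellman P r γ π κ V V s = ∑ a, π s a * (r s a + γ * ∑ s', P s a s' * V s') := by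
  refine sum_congr rfl fun a _ => congrArg (π s a * ·) ?_
  calc ∑ s', P s a s' * (r s a + γ * κ s s' * V s' + γ * (1 - κ s s') * V s')
      = (∑ s', P s a s') * r s a + γ * ∑ s', P s a s' * V s' := by
        rw [sum_mul, mul_sum, ← sum_add_distrib]
        exact sum_congr rfl fun s' _ => by ring
    _ = r s a + γ * ∑ s', P s a s' * V s' := by rw [(hP s).2 a, one_mul]

theorem reshapedBellman_sub (g₁ g₂ U W : S → ℝ) (s : S) :
    reshapedBellman P r γ π κ g₁ U s - reshapedBellman P r γ π κ g₂ W s =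
      ∑ a, π s a * ∑ s', P s a s' *
        (γ * (κ s s' * g₁ s' - κ s s' * g₂ s') + γ * (1 - κ s s') * (U s' - W s')) := by
  simp only [reshapedBellman, ← sum_sub_distrib, ← mul_sub]
  exact sum_congr rfl fun a _ => congrArg (π s a * ·) (sum_congr rfl fun s' _ => by ring)

theorem reshapedBellman_sub_le (hπ : IsStochastic π) (hP : ∀ s, IsStochastic (P s))
    (hγ : 0 ≤ γ) (hκ : ∀ s s', κ s s' ∈ Set.Icc (0 : ℝ) 1) {g₁ g₂ : S → ℝ}
    (hg : ∀ s s', κ s s' * g₁ s' ≤ κ s s' * g₂ s') {U W : S → ℝ} {c : ℝ} (hc : 0 ≤ c)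
    (hUW : ∀ s, U s - W s ≤ c) (s : S) :
    reshapedBellman P r γ π κ g₁ U s - reshapedBellman P r γ π κ g₂ W s ≤ γ * c := by
  rw [reshapedBellman_sub]
  refine hπ.sum_mul_le s fun a => (hP s).sum_mul_le a fun s' => ?_
  obtain ⟨hκ0, hκ1⟩ := hκ s s'
  have heuristic : γ * (κ s s' * g₁ s' - κ s s' * g₂ s') ≤ 0 :=
    mul_nonpos_of_nonneg_of_nonpos hγ (sub_nonpos.2 (hg s s'))
  have continuation : γ * (1 - κ s s') * (U s' - W s') ≤ γ * (1 - κ s s') * c :=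
    mul_le_mul_of_nonneg_left (hUW s') (mul_nonneg hγ (sub_nonneg.2 hκ1))
  nlinarith [mul_nonneg (mul_nonneg hγ hκ0) hc]

theorem nonpos_of_forall_le_mul {γ : ℝ} (hγ : γ < 1) {D : S → ℝ}
    (hD : ∀ c, 0 ≤ c → (∀ s, D s ≤ c) → ∀ s, D s ≤ γ * c) (s : S) : D s ≤ 0 := by
  have : Nonempty S := ⟨s⟩
  obtain ⟨s₀, hs₀⟩ := Finite.exists_max D
  have hmax := hD (max (D s₀) 0) (le_max_right _ _) (fun s => (hs₀ s).trans (le_max_left _ _)) s₀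
  have : D s₀ ≤ 0 := by
    by_contra! hpos
    rw [max_eq_left hpos.le] at hmax
    nlinarith
  exact (hs₀ s).trans this

theorem reshapedValue_le (hπ : IsStochastic π) (hP : ∀ s, IsStochastic (P s)) (hγ0 : 0 ≤ γ)
    (hγ1 : γ < 1) (hκ : ∀ s s', κ s s' ∈ Set.Icc (0 : ℝ) 1) {g₁ g₂ U W : S → ℝ}
    (hg : ∀ s s', κ s s' * g₁ s' ≤ κ s s' * g₂ s')
    (hU : ∀ s, U s = reshapedBellman P r γ π κ g₁ U s)
    (hW : ∀ s, W s = reshapedBellman P r γ π κ g₂ W s) (s : S) : U s ≤ W s := by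
  refine sub_nonpos.1
    (nonpos_of_forall_le_mul (D := fun s => U s - W s) hγ1 (fun c hc hUW s => ?_) s)
  rw [hU s, hW s]
  exact reshapedBellman_sub_le hπ hP hγ0 hκ hg hc hUW s

theorem reshapedValue_le_value (hπ : IsStochastic π) (hP : ∀ s, IsStochastic (P s))
    (hγ0 : 0 ≤ γ) (hγ1 : γ < 1) (hκ : ∀ s s', κ s s' ∈ Set.Icc (0 : ℝ) 1) {g U V : S → ℝ}
    (hV : ∀ s, V s = ∑ a, π s a * (r s a + γ * ∑ s', P s a s' * V s'))
    (hg : ∀ s s', κ s s' * g s' ≤ κ s s' * V s')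
    (hU : ∀ s, U s = reshapedBellman P r γ π κ g U s) (s : S) : U s ≤ V s :=
  reshapedValue_le hπ hP hγ0 hγ1 hκ hg hU
    (fun s => (hV s).trans (reshapedBellman_self hP V s).symm) s

theorem value_le_reshapedValue (hπ : IsStochastic π) (hP : ∀ s, IsStochastic (P s))
    (hγ0 : 0 ≤ γ) (hγ1 : γ < 1) (hκ : ∀ s s', κ s s' ∈ Set.Icc (0 : ℝ) 1) {g U V : S → ℝ}
    (hV : ∀ s, V s = ∑ a, π s a * (r s a + γ * ∑ s', P s a s' * V s'))
    (hg : ∀ s s', κ s s' * V s' ≤ κ s s' * g s')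
    (hU : ∀ s, U s = reshapedBellman P r γ π κ g U s) (s : S) : V s ≤ U s :=
  reshapedValue_le hπ hP hγ0 hγ1 hκ hg
    (fun s => (hV s).trans (reshapedBellman_self hP V s).symm) hU s

end Bellman

section Occupancy

variable {P : S → A → S → ℝ} {π : S → A → ℝ}

noncomputable def flowExpectation (ρ : S → ℝ) (π : S → A → ℝ) (P : S → A → S → ℝ)
    (w : S → S → ℝ) : ℝ :=
  ∑ s, ∑ a, ∑ s', ρ s * π s a * P s a s' * w s s'

/-- With `ρ t` the state distribution at time `t`, `(1 - γ) * discountedFlow γ ρ π P w` is the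
expectation of `w s s'` under the discounted occupancy `d^π` of transitions `(s, a, s')`. -/
noncomputable def discountedFlow (γ : ℝ) (ρ : ℕ → S → ℝ) (π : S → A → ℝ) (P : S → A → S → ℝ)
    (w : S → S → ℝ) : ℝ :=
  ∑' t, γ ^ t * flowExpectation (ρ t) π P w

theorem flowExpectation_mono {ρ : S → ℝ} (hρ : ∀ s, 0 ≤ ρ s) (hπ : IsStochastic π)
    (hP : ∀ s, IsStochastic (P s)) {w₁ w₂ : S → S → ℝ} (hw : ∀ s s', w₁ s s' ≤ w₂ s s') :
    flowExpectation ρ π P w₁ ≤ flowExpectation ρ π P w₂ := by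
  unfold flowExpectation
  gcongr with s _ a _ s' _
  · exact mul_nonneg (mul_nonneg (hρ s) (hπ.1 s a)) ((hP s).1 a s')
  · exact hw s s'

theorem flowExpectation_mul_left (ρ : S → ℝ) (c : ℝ) (w : S → S → ℝ) :
    flowExpectation ρ π P (fun s s' => c * w s s') = c * flowExpectation ρ π P w := by
  simp only [flowExpectation, mul_sum]
  exact sum_congr rfl fun s _ => sum_congr rfl fun a _ => sum_congr rfl fun s' _ => by ring

theorem flowExpectation_const (ρ : S → ℝ) (hπ : IsStochastic π) (hP : ∀ s, IsStochastic (P s))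
    (c : ℝ) : flowExpectation ρ π P (fun _ _ => c) = c * ∑ s, ρ s := by
  simp only [flowExpectation, ← sum_mul, ← mul_sum, (hP _).2, mul_one, hπ.2, mul_comm]

theorem abs_flowExpectation_le {ρ : S → ℝ} (hρ : ∀ s, 0 ≤ ρ s) (hπ : IsStochastic π)
    (hP : ∀ s, IsStochastic (P s)) {w : S → S → ℝ} {M : ℝ} (hw : ∀ s s', |w s s'| ≤ M) :
    |flowExpectation ρ π P w| ≤ M * ∑ s, ρ s := by
  have lower := flowExpectation_mono hρ hπ hP fun s s' => (abs_le.1 (hw s s')).1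
  have upper := flowExpectation_mono hρ hπ hP fun s s' => (abs_le.1 (hw s s')).2
  rw [flowExpectation_const ρ hπ hP] at lower upper
  exact abs_le.2 ⟨by linarith, upper⟩

theorem occupancy_nonneg {ρ : ℕ → S → ℝ} (hπ : IsStochastic π) (hP : ∀ s, IsStochastic (P s))
    (hρ : ∀ t s', ρ (t + 1) s' = ∑ s, ∑ a, ρ t s * π s a * P s a s') (h0 : ∀ s, 0 ≤ ρ 0 s) :
    ∀ t s, 0 ≤ ρ t s
  | 0 => h0
  | t + 1 => fun s' => by
    rw [hρ]
    have := occupancy_nonneg hπ hP hρ h0 t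
    exact sum_nonneg fun s _ => sum_nonneg fun a _ =>
      mul_nonneg (mul_nonneg (this s) (hπ.1 s a)) ((hP s).1 a s')

theorem occupancy_sum_eq_one {ρ : ℕ → S → ℝ} (hπ : IsStochastic π)
    (hP : ∀ s, IsStochastic (P s))
    (hρ : ∀ t s', ρ (t + 1) s' = ∑ s, ∑ a, ρ t s * π s a * P s a s') (h0 : ∑ s, ρ 0 s = 1) :
    ∀ t, ∑ s, ρ t s = 1
  | 0 => h0
  | t + 1 => by
    calc ∑ s', ρ (t + 1) s' = flowExpectation (ρ t) π P (fun _ _ => 1) := by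
          simp only [hρ, flowExpectation, mul_one]
          rw [sum_comm]
          exact sum_congr rfl fun s _ => sum_comm
      _ = 1 := by rw [flowExpectation_const _ hπ hP, one_mul, occupancy_sum_eq_one hπ hP hρ h0 t]

variable {γ : ℝ} {ρ : ℕ → S → ℝ}

theorem summable_discountedFlow (hγ0 : 0 ≤ γ) (hγ1 : γ < 1) (hπ : IsStochastic π)
    (hP : ∀ s, IsStochastic (P s)) (hρ : ∀ t s, 0 ≤ ρ t s) (hρsum : ∀ t, ∑ s, ρ t s = 1)
    (w : S → S → ℝ) : Summable fun t => γ ^ t * flowExpectation (ρ t) π P w := by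
  obtain ⟨M, hM⟩ := (Set.finite_range fun p : S × S => |w p.1 p.2|).bddAbove
  refine .of_norm_bounded ((summable_geometric_of_lt_one hγ0 hγ1).mul_left M) fun t => ?_
  rw [norm_mul, norm_pow, Real.norm_of_nonneg hγ0, Real.norm_eq_abs, mul_comm]
  gcongr
  simpa [hρsum] using abs_flowExpectation_le (hρ t) hπ hP fun s s' =>
    hM (Set.mem_range_self (s, s'))

theorem discountedFlow_nonneg (hγ0 : 0 ≤ γ) (hπ : IsStochastic π) (hP : ∀ s, IsStochastic (P s))
    (hρ : ∀ t s, 0 ≤ ρ t s) {w : S → S → ℝ} (hw : ∀ s s', 0 ≤ w s s') :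
    0 ≤ discountedFlow γ ρ π P w := by
  refine tsum_nonneg fun t => mul_nonneg (pow_nonneg hγ0 t) ?_
  simpa [flowExpectation_const _ hπ hP] using flowExpectation_mono (hρ t) hπ hP hw

theorem discountedFlow_mono (hγ0 : 0 ≤ γ) (hγ1 : γ < 1) (hπ : IsStochastic π)
    (hP : ∀ s, IsStochastic (P s)) (hρ : ∀ t s, 0 ≤ ρ t s) (hρsum : ∀ t, ∑ s, ρ t s = 1)
    {w₁ w₂ : S → S → ℝ} (hw : ∀ s s', w₁ s s' ≤ w₂ s s') :
    discountedFlow γ ρ π P w₁ ≤ discountedFlow γ ρ π P w₂ :=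
  (summable_discountedFlow hγ0 hγ1 hπ hP hρ hρsum w₁).tsum_le_tsum
    (fun t => by gcongr; exact flowExpectation_mono (hρ t) hπ hP hw)
    (summable_discountedFlow hγ0 hγ1 hπ hP hρ hρsum w₂)

theorem discountedFlow_eq_zero {w : S → S → ℝ} (hw : ∀ s s', w s s' = 0) :
    discountedFlow γ ρ π P w = 0 := by
  simp [discountedFlow, flowExpectation, hw]

theorem discountedFlow_mul_left (c : ℝ) (w : S → S → ℝ) :
    discountedFlow γ ρ π P (fun s s' => c * w s s') = c * discountedFlow γ ρ π P w := by
  simp only [discountedFlow, flowExpectation_mul_left, mul_left_comm _ c, tsum_mul_left]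

end Occupancy

end ReshapedMDP

open ReshapedMDP

open Classical in
theorem hubl_bias_upper_bound_general
    {S A : Type*} [Fintype S] [Fintype A]
    (P : S → A → S → ℝ) (r : S → A → ℝ)
    (γ : ℝ) (hγ0 : 0 ≤ γ) (hγ1 : γ < 1)
    (lam : ℝ) (hlam : lam ∈ Set.Icc (0 : ℝ) 1)
    (Ω : Set S)
    (hPnn : ∀ s a s', 0 ≤ P s a s') (hPsum : ∀ s a, ∑ s', P s a s' = 1)
    (πstar : S → A → ℝ)
    (hπnn : ∀ s a, 0 ≤ πstar s a) (hπsum : ∀ s, ∑ a, πstar s a = 1)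
    (Vstar Vμ Vtstar : S → ℝ)
    (hVstar : ∀ s, Vstar s = ∑ a, πstar s a *
      (r s a + γ * ∑ s', P s a s' * Vstar s'))
    (h : S → ℝ)
    (hh : ∀ s ∈ Ω, h s = Vμ s) (hhle : ∀ s, h s ≤ Vstar s)
    -- reshaped value of πstar with blending λ(s,s') = lam·1{s∈Ω ∧ s'∈Ω}
    (hVtstar : ∀ s, Vtstar s = ∑ a, πstar s a * ∑ s', P s a s' *
      (r s a + γ * (if s ∈ Ω ∧ s' ∈ Ω then lam else 0) * h s'
        + γ * (1 - (if s ∈ Ω ∧ s' ∈ Ω then lam else 0)) * Vtstar s'))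
    (d₀ : S → ℝ) (hd₀nn : ∀ s, 0 ≤ d₀ s) (hd₀sum : ∑ s, d₀ s = 1)
    (ρ : ℕ → S → ℝ) (hρ0 : ∀ s, ρ 0 s = d₀ s)
    (hρ : ∀ t s', ρ (t + 1) s' = ∑ s, ∑ a, ρ t s * πstar s a * P s a s') :
    -- probability of the conditioning event {s ∈ Ω ∧ s' ∈ Ω}
    (let Z : ℝ := (1 - γ) * ∑' t : ℕ, γ ^ t *
        ∑ s, ∑ a, ∑ s', ρ t s * πstar s a * P s a s' *
          (if s ∈ Ω ∧ s' ∈ Ω then (1 : ℝ) else 0);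
     ((γ / (1 - γ)) * ((1 - γ) * ∑' t : ℕ, γ ^ t *
        ∑ s, ∑ a, ∑ s', ρ t s * πstar s a * P s a s' *
          ((if s ∈ Ω ∧ s' ∈ Ω then lam else 0) * (Vtstar s' - h s'))) / Z
      ≤ (γ * lam / (1 - γ)) * ((1 - γ) * ∑' t : ℕ, γ ^ t *
          ∑ s, ∑ a, ∑ s', ρ t s * πstar s a * P s a s' *
            ((if s ∈ Ω ∧ s' ∈ Ω then (1 : ℝ) else 0) *
              (Vstar s' - Vμ s'))) / Z)
     ∧ ((∀ s ∈ Ω, Vμ s = Vstar s) → (∀ t s, s ∉ Ω → ρ t s = 0) →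
        (γ / (1 - γ)) * ((1 - γ) * ∑' t : ℕ, γ ^ t *
          ∑ s, ∑ a, ∑ s', ρ t s * πstar s a * P s a s' *
            ((if s ∈ Ω ∧ s' ∈ Ω then lam else 0) * (Vtstar s' - h s'))) / Z
          = 0)) := by
  intro Z
  have hπ : IsStochastic πstar := ⟨hπnn, hπsum⟩
  have hP : ∀ s, IsStochastic (P s) := fun s => ⟨hPnn s, hPsum s⟩
  have hκ : ∀ s s' : S, (if s ∈ Ω ∧ s' ∈ Ω then lam else 0) ∈ Set.Icc (0 : ℝ) 1 := fun s s' => by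
    split_ifs
    exacts [hlam, ⟨le_rfl, zero_le_one⟩]
  have hρnn := occupancy_nonneg hπ hP hρ fun s => (hρ0 s).symm ▸ hd₀nn s
  have hρsum := occupancy_sum_eq_one hπ hP hρ (by simp only [hρ0, hd₀sum])
  have hdom : ∀ s, Vtstar s ≤ Vstar s := reshapedValue_le_value hπ hP hγ0 hγ1 hκ hVstar
    (fun s s' => mul_le_mul_of_nonneg_left (hhle s') (hκ s s').1) hVtstar
  have hZ : 0 ≤ Z := mul_nonneg (by linarith) (discountedFlow_nonneg hγ0 hπ hP hρnn
    fun s s' => by split_ifs <;> norm_num)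
  have hnormalize : ∀ c x : ℝ, c / (1 - γ) * ((1 - γ) * x) = c * x := fun c x => by
    field_simp [show 1 - γ ≠ 0 by linarith]
  refine ⟨?_, fun hVμ_opt _ => ?_⟩
  · rw [hnormalize, hnormalize, mul_assoc]
    gcongr
    refine (discountedFlow_mono hγ0 hγ1 hπ hP hρnn hρsum fun s s' => ?_).trans_eq
      (discountedFlow_mul_left lam _)
    split_ifs with hs
    · rw [one_mul, ← hh s' hs.2]
      exact mul_le_mul_of_nonneg_left (by linarith [hdom s']) hlam.1
    · simp
  · have hh_opt : ∀ s ∈ Ω, h s = Vstar s := fun s hs => (hh s hs).trans (hVμ_opt s hs)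
    have hrev : ∀ s, Vstar s ≤ Vtstar s := value_le_reshapedValue hπ hP hγ0 hγ1 hκ hVstar
      (fun s s' => by split_ifs with hs; exacts [(congrArg _ (hh_opt s' hs.2)).ge, by simp])
      hVtstar
    have hbias_zero : ∀ s s', (if s ∈ Ω ∧ s' ∈ Ω then lam else 0) * (Vtstar s' - h s') = 0 := by
      intro s s'
      split_ifs with hs
      · rw [le_antisymm (hdom s') (hrev s'), hh_opt s' hs.2, sub_self, mul_zero]
      · rw [zero_mul]
    change γ / (1 - γ) * ((1 - γ) * discountedFlow γ ρ πstar P _) / Z = 0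
    rw [discountedFlow_eq_zero hbias_zero, mul_zero, mul_zero, zero_div]

open Classical in
/-- Bias upper bound under exact behavior heuristic (Lemma
`bias-bound` of HUBL).  Constant blending `λ` on the support `Ω` (zero
outside), heuristic `h = V^μ` on `Ω` with `h ≤ V*` everywhere.  Then
`Bias ≤ (γλ/(1−γ)) E_{d^{π*}}[V*(s') − V^μ(s') | s, s' ∈ Ω]`, where both
conditional expectations are normalized by the probability `Z` of the event
`{s, s' ∈ Ω}` under the discounted occupancy of `π*`.  In particular, if
`V^μ = V*` on `Ω` and the occupancy of `π*` stays in `Ω`, the bias is zero. -/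
theorem hubl_bias_upper_bound
    {S A : Type*} [Fintype S] [Fintype A]
    (P : S → A → S → ℝ) (r : S → A → ℝ)
    (γ : ℝ) (hγ0 : 0 ≤ γ) (hγ1 : γ < 1)
    (lam : ℝ) (hlam : lam ∈ Set.Icc (0 : ℝ) 1)
    (Ω : Set S)
    (hPnn : ∀ s a s', 0 ≤ P s a s') (hPsum : ∀ s a, ∑ s', P s a s' = 1)
    (πstar μ : S → A → ℝ)
    (hπnn : ∀ s a, 0 ≤ πstar s a) (hπsum : ∀ s, ∑ a, πstar s a = 1)
    (hμnn : ∀ s a, 0 ≤ μ s a) (hμsum : ∀ s, ∑ a, μ s a = 1)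
    (Vstar Vμ Vtstar : S → ℝ)
    (hVstar : ∀ s, Vstar s = ∑ a, πstar s a *
      (r s a + γ * ∑ s', P s a s' * Vstar s'))
    (hVμ : ∀ s, Vμ s = ∑ a, μ s a * (r s a + γ * ∑ s', P s a s' * Vμ s'))
    -- optimality of πstar
    (hopt : ∀ (π' : S → A → ℝ) (V' : S → ℝ),
      (∀ s a, 0 ≤ π' s a) → (∀ s, ∑ a, π' s a = 1) →
      (∀ s, V' s = ∑ a, π' s a * (r s a + γ * ∑ s', P s a s' * V' s')) →
      ∀ s, V' s ≤ Vstar s)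
    (h : S → ℝ)
    (hh : ∀ s ∈ Ω, h s = Vμ s) (hhle : ∀ s, h s ≤ Vstar s)
    -- reshaped value of πstar with blending λ(s,s') = lam·1{s∈Ω ∧ s'∈Ω}
    (hVtstar : ∀ s, Vtstar s = ∑ a, πstar s a * ∑ s', P s a s' *
      (r s a + γ * (if s ∈ Ω ∧ s' ∈ Ω then lam else 0) * h s'
        + γ * (1 - (if s ∈ Ω ∧ s' ∈ Ω then lam else 0)) * Vtstar s'))
    (d₀ : S → ℝ) (hd₀nn : ∀ s, 0 ≤ d₀ s) (hd₀sum : ∑ s, d₀ s = 1)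
    (ρ : ℕ → S → ℝ) (hρ0 : ∀ s, ρ 0 s = d₀ s)
    (hρ : ∀ t s', ρ (t + 1) s' = ∑ s, ∑ a, ρ t s * πstar s a * P s a s') :
    -- probability of the conditioning event {s ∈ Ω ∧ s' ∈ Ω}
    (let Z : ℝ := (1 - γ) * ∑' t : ℕ, γ ^ t *
        ∑ s, ∑ a, ∑ s', ρ t s * πstar s a * P s a s' *
          (if s ∈ Ω ∧ s' ∈ Ω then (1 : ℝ) else 0);
     ((γ / (1 - γ)) * ((1 - γ) * ∑' t : ℕ, γ ^ t *
        ∑ s, ∑ a, ∑ s', ρ t s * πstar s a * P s a s' *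
          ((if s ∈ Ω ∧ s' ∈ Ω then lam else 0) * (Vtstar s' - h s'))) / Z
      ≤ (γ * lam / (1 - γ)) * ((1 - γ) * ∑' t : ℕ, γ ^ t *
          ∑ s, ∑ a, ∑ s', ρ t s * πstar s a * P s a s' *
            ((if s ∈ Ω ∧ s' ∈ Ω then (1 : ℝ) else 0) *
              (Vstar s' - Vμ s'))) / Z)
     ∧ ((∀ s ∈ Ω, Vμ s = Vstar s) → (∀ t s, s ∉ Ω → ρ t s = 0) →
        (γ / (1 - γ)) * ((1 - γ) * ∑' t : ℕ, γ ^ t *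
          ∑ s, ∑ a, ∑ s', ρ t s * πstar s a * P s a s' *
            ((if s ∈ Ω ∧ s' ∈ Ω then lam else 0) * (Vtstar s' - h s'))) / Z
          = 0)) :=
  hubl_bias_upper_bound_general P r γ hγ0 hγ1 lam hlam Ω hPnn hPsum πstar hπnn hπsum Vstar Vμ Vtstar
    hVstar h hh hhle hVtstar d₀ hd₀nn hd₀sum ρ hρ0 hρ
end
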